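/- Assume P = Q and fix λ ∈ [0, 1). Define V_0^{CVaR} as the infimum of E[M_0] over all P-supermartingales (M_k)_{k=0}^n satisfying CVaR_λ( (S_k − M_k)^+ ) ≤ α_k for every k ∈ {1,…,n}, and for z = (z_1,…,z_n) define G(z_1,…,z_n) as the infimum of E[M_0] over all P-supermartingales (M_k)_{k=0}^n satisfying (1−λ)^{-1} E[ (S_k − M_k − z_k)^+ ] + z_k ≤ α_k for every k ∈ {1,…,n}. Then V_0^{CVaR} = inf{ G(z_1,…,z_n) : z_k ∈ [0, α_k] for every k }. -/

import Mathlib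

open MeasureTheory Filter
open scoped MeasureTheory

/-- A supermartingale (under measure `μ`) on the discrete time interval `{a,…,b}`. -/
def IsSupermartingaleOn {Ω : Type*} {m0 : MeasurableSpace Ω}
    (𝓕 : MeasureTheory.Filtration ℕ m0) (μ : Measure Ω)
    (M : ℕ → Ω → ℝ) (a b : ℕ) : Prop :=
  (∀ k, a ≤ k → k ≤ b → StronglyMeasurable[𝓕 k] (M k)) ∧
  (∀ k, a ≤ k → k ≤ b → Integrable (M k) μ) ∧
  (∀ k, a ≤ k → k < b → (μ[M (k + 1)|𝓕 k]) ≤ᵐ[μ] M k)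

/-- The conditional Value at Risk of a loss `X` at level `lam`:
`CVaR_lam(X) = inf_z { (1-lam)⁻¹ E[(X-z)⁺] + z }`. -/
noncomputable def CVaR {Ω : Type*} {m0 : MeasurableSpace Ω} (P : Measure Ω)
    (lam : ℝ) (X : Ω → ℝ) : ℝ :=
  sInf {y : ℝ | ∃ z : ℝ, y = (1 - lam)⁻¹ * (∫ ω, max (X ω - z) 0 ∂P) + z}

/-! For a nonnegative integrable loss `X`, the objective `z ↦ (1-λ)⁻¹ E[(X-z)⁺] + z` is continuous,
dominates `z` and is nonincreasing on `(-∞, 0]`, so its infimum is attained at some `z ≥ 0`. Hence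
`CVaR(X) ≤ α` iff some `z ∈ [0, α]` has objective `≤ α`, and for `X = (S_k - M_k)⁺` and `z ≥ 0` the
objective is that of `S_k - M_k`. So the CVaR-feasible supermartingales are the union over
`z ∈ ∏ₖ [0, α_k]` of the expected-shortfall-feasible ones, and an infimum over a union is the
infimum of the infima: every `G(z)` contains the cost of the martingale `E[∑ⱼ S_j⁺ | 𝓕_k]`, and all
costs are at least `E[S_1] - α_1`. -/

open Set

lemma csInf_biUnion_eq_csInf_image {ι α : Type*} [ConditionallyCompleteLattice α]
    {I : Set ι} {G : ι → Set α} (hI : I.Nonempty) (hG : ∀ i ∈ I, (G i).Nonempty)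
    (hbdd : BddBelow (⋃ i ∈ I, G i)) :
    sInf (⋃ i ∈ I, G i) = sInf ((fun i => sInf (G i)) '' I) := by
  obtain ⟨b, hb⟩ := hbdd
  have hGb : ∀ i ∈ I, b ∈ lowerBounds (G i) := fun i hi x hx => hb (mem_biUnion hi hx)
  apply le_antisymm
  · refine le_csInf (hI.image _) ?_
    rintro _ ⟨i, hi, rfl⟩
    exact csInf_le_csInf ⟨b, hb⟩ (hG i hi) (subset_biUnion_of_mem hi)
  · obtain ⟨i, hi⟩ := hI
    have himage : BddBelow ((fun i => sInf (G i)) '' I) := by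
      refine ⟨b, ?_⟩
      rintro _ ⟨j, hj, rfl⟩
      exact le_csInf (hG j hj) (hGb j hj)
    refine le_csInf ((hG i hi).mono (subset_biUnion_of_mem hi)) ?_
    simp only [mem_iUnion]
    rintro x ⟨j, hj, hx⟩
    exact (csInf_le himage ⟨j, hj, rfl⟩).trans (csInf_le ⟨b, hGb j hj⟩ hx)

lemma max_sub_max_zero {a z : ℝ} (hz : 0 ≤ z) : max (max a 0 - z) 0 = max (a - z) 0 := by
  rcases le_total a 0 with ha | ha
  · simp [max_eq_right ha, hz, show a - z ≤ 0 by linarith]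
  · rw [max_eq_left ha]

section CVaR

variable {Ω : Type*} {m0 : MeasurableSpace Ω} {P : Measure Ω} {lam : ℝ} {X : Ω → ℝ}

variable (P lam X) in
noncomputable def cvarObjective (z : ℝ) : ℝ :=
  (1 - lam)⁻¹ * (∫ ω, max (X ω - z) 0 ∂P) + z

lemma CVaR_eq_sInf_range : CVaR P lam X = sInf (range (cvarObjective P lam X)) := by
  simp only [CVaR, cvarObjective, range, eq_comm]

lemma le_cvarObjective (hlam1 : lam < 1) (z : ℝ) : z ≤ cvarObjective P lam X z := by
  have : 0 ≤ (1 - lam)⁻¹ * ∫ ω, max (X ω - z) 0 ∂P :=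
    mul_nonneg (inv_nonneg.2 (by linarith)) (integral_nonneg fun _ => le_max_right _ _)
  unfold cvarObjective
  linarith

lemma integral_le_cvarObjective [IsProbabilityMeasure P] (hlam0 : 0 ≤ lam) (hlam1 : lam < 1)
    (hX : Integrable X P) (z : ℝ) : ∫ ω, X ω ∂P ≤ cvarObjective P lam X z := by
  have hpos : Integrable (fun ω => max (X ω - z) 0) P := (hX.sub (integrable_const z)).pos_part
  have hmean : ∫ ω, X ω ∂P ≤ (∫ ω, max (X ω - z) 0 ∂P) + z := by
    calc ∫ ω, X ω ∂P ≤ ∫ ω, (max (X ω - z) 0 + z) ∂P :=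
          integral_mono hX (hpos.add (integrable_const z)) fun ω => by
            linarith [le_max_left (X ω - z) 0]
      _ = (∫ ω, max (X ω - z) 0 ∂P) + z := by simp [integral_add hpos (integrable_const z)]
  have hscale : ∫ ω, max (X ω - z) 0 ∂P ≤ (1 - lam)⁻¹ * ∫ ω, max (X ω - z) 0 ∂P :=
    le_mul_of_one_le_left (integral_nonneg fun _ => le_max_right _ _)
      ((one_le_inv₀ (by linarith)).2 (by linarith))
  unfold cvarObjective
  linarith

lemma cvarObjective_sub_eq_of_ae_le {Y W : Ω → ℝ} (hYW : Y ≤ᵐ[P] W) {z : ℝ} (hz : 0 ≤ z) :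
    cvarObjective P lam (fun ω => Y ω - W ω) z = z := by
  have : (fun ω => max (Y ω - W ω - z) 0) =ᵐ[P] 0 := by
    filter_upwards [hYW] with ω hω
    exact max_eq_right (by linarith)
  simp [cvarObjective, integral_congr_ae this]

/-- For `z ≤ 0` the objective of a nonnegative loss is affine in `z`, with slope
`1 - (1 - lam)⁻¹ ≤ 0`. -/
lemma cvarObjective_zero_le [IsProbabilityMeasure P] (hlam0 : 0 ≤ lam) (hlam1 : lam < 1)
    (hX : Integrable X P) (hX0 : 0 ≤ᵐ[P] X) {z : ℝ} (hz : z ≤ 0) :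
    cvarObjective P lam X 0 ≤ cvarObjective P lam X z := by
  have hshift : ∀ w ≤ 0, ∫ ω, max (X ω - w) 0 ∂P = (∫ ω, X ω ∂P) - w := fun w hw => by
    rw [show (∫ ω, X ω ∂P) - w = ∫ ω, (X ω - w) ∂P by
      simp [integral_sub hX (integrable_const w)]]
    refine integral_congr_ae ?_
    filter_upwards [hX0] with ω hω
    exact max_eq_left (by simp only [Pi.zero_apply] at hω; linarith)
  have h1 : 1 ≤ (1 - lam)⁻¹ := (one_le_inv₀ (by linarith)).2 (by linarith)
  simp only [cvarObjective, hshift z hz, hshift 0 le_rfl]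
  nlinarith

lemma continuous_cvarObjective [IsFiniteMeasure P] (hX : Integrable X P) :
    Continuous (cvarObjective P lam X) := by
  have hpos : ∀ z, Integrable (fun ω => max (X ω - z) 0) P := fun z =>
    (hX.sub (integrable_const z)).pos_part
  have hlip : LipschitzWith (P.real univ).toNNReal fun z => ∫ ω, max (X ω - z) 0 ∂P := by
    refine LipschitzWith.of_le_add_mul' (P.real univ) fun z w => ?_
    calc ∫ ω, max (X ω - z) 0 ∂P ≤ ∫ ω, (max (X ω - w) 0 + dist z w) ∂P := by
          refine integral_mono (hpos z) ((hpos w).add (integrable_const _)) fun ω => ?_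
          have : w - z ≤ dist z w := by rw [dist_comm, Real.dist_eq]; exact le_abs_self _
          exact max_le (by linarith [le_max_left (X ω - w) 0]) (by positivity)
      _ = (∫ ω, max (X ω - w) 0 ∂P) + P.real univ * dist z w := by
          simp [integral_add (hpos w) (integrable_const _)]
  exact (continuous_const.mul hlip.continuous).add continuous_id

/-- With `f = cvarObjective P lam X`, minimizing over `[0, f 0]` suffices: `f w ≥ f 0` for
`w ≤ 0`, and `f w ≥ w` always. -/
lemma exists_forall_cvarObjective_le [IsProbabilityMeasure P] (hlam0 : 0 ≤ lam) (hlam1 : lam < 1)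
    (hX : Integrable X P) (hX0 : 0 ≤ᵐ[P] X) :
    ∃ z, 0 ≤ z ∧ ∀ w, cvarObjective P lam X z ≤ cvarObjective P lam X w := by
  have hf0 : 0 ≤ cvarObjective P lam X 0 := le_cvarObjective hlam1 0
  obtain ⟨z, hz, hmin⟩ := isCompact_Icc.exists_isMinOn (nonempty_Icc.2 hf0)
    (continuous_cvarObjective (lam := lam) hX).continuousOn
  have hz0 : cvarObjective P lam X z ≤ cvarObjective P lam X 0 := hmin ⟨le_rfl, hf0⟩
  refine ⟨z, hz.1, fun w => ?_⟩
  rcases le_or_gt w 0 with hw | hw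
  · exact hz0.trans (cvarObjective_zero_le hlam0 hlam1 hX hX0 hw)
  rcases le_or_gt w (cvarObjective P lam X 0) with hw' | hw'
  · exact hmin ⟨hw.le, hw'⟩
  · exact hz0.trans (hw'.le.trans (le_cvarObjective hlam1 w))

lemma CVaR_le_iff [IsProbabilityMeasure P] (hlam0 : 0 ≤ lam) (hlam1 : lam < 1)
    (hX : Integrable X P) (hX0 : 0 ≤ᵐ[P] X) {a : ℝ} :
    CVaR P lam X ≤ a ↔ ∃ z ∈ Icc 0 a, cvarObjective P lam X z ≤ a := by
  obtain ⟨z, hz0, hmin⟩ := exists_forall_cvarObjective_le hlam0 hlam1 hX hX0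
  have hCVaR : CVaR P lam X = cvarObjective P lam X z := by
    rw [CVaR_eq_sInf_range]
    exact IsLeast.csInf_eq ⟨mem_range_self z, by rintro _ ⟨w, rfl⟩; exact hmin w⟩
  rw [hCVaR]
  exact ⟨fun h => ⟨z, ⟨hz0, (le_cvarObjective hlam1 z).trans h⟩, h⟩,
    fun ⟨w, _, hw⟩ => (hmin w).trans hw⟩

lemma cvarObjective_posPart {Y : Ω → ℝ} {z : ℝ} (hz : 0 ≤ z) :
    cvarObjective P lam (fun ω => max (Y ω) 0) z = cvarObjective P lam Y z := by
  simp only [cvarObjective, max_sub_max_zero hz]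

lemma CVaR_posPart_le_iff [IsProbabilityMeasure P] (hlam0 : 0 ≤ lam) (hlam1 : lam < 1)
    {Y : Ω → ℝ} (hY : Integrable Y P) {a : ℝ} :
    CVaR P lam (fun ω => max (Y ω) 0) ≤ a ↔ ∃ z ∈ Icc 0 a, cvarObjective P lam Y z ≤ a := by
  rw [CVaR_le_iff hlam0 hlam1 hY.pos_part (Eventually.of_forall fun ω => le_max_right (Y ω) 0)]
  exact exists_congr fun z => and_congr_right fun hz => by rw [cvarObjective_posPart hz.1]

lemma forall_CVaR_posPart_le_iff [IsProbabilityMeasure P] (hlam0 : 0 ≤ lam) (hlam1 : lam < 1)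
    {n : ℕ} {Y : ℕ → Ω → ℝ} (hY : ∀ k, 1 ≤ k → k ≤ n → Integrable (Y k) P) {α : ℕ → ℝ} :
    (∀ k, 1 ≤ k → k ≤ n → CVaR P lam (fun ω => max (Y k ω) 0) ≤ α k) ↔
      ∃ z : ℕ → ℝ, (∀ k, 1 ≤ k → k ≤ n → z k ∈ Icc 0 (α k)) ∧
        ∀ k, 1 ≤ k → k ≤ n → cvarObjective P lam (Y k) (z k) ≤ α k := by
  constructor
  · intro h
    have := fun k hk1 hkn => (CVaR_posPart_le_iff hlam0 hlam1 (hY k hk1 hkn)).1 (h k hk1 hkn)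
    choose! z hz hzα using this
    exact ⟨z, hz, hzα⟩
  · rintro ⟨z, hz, hzα⟩ k hk1 hkn
    exact (CVaR_posPart_le_iff hlam0 hlam1 (hY k hk1 hkn)).2 ⟨z k, hz k hk1 hkn, hzα k hk1 hkn⟩

end CVaR

section Supermartingale

variable {Ω : Type*} {m0 : MeasurableSpace Ω} {P : Measure Ω} {𝓕 : Filtration ℕ m0}
  {M : ℕ → Ω → ℝ}

lemma MeasureTheory.Supermartingale.isSupermartingaleOn (hM : Supermartingale M 𝓕 P) (a b : ℕ) :
    IsSupermartingaleOn 𝓕 P M a b :=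
  ⟨fun k _ _ => hM.1 k, fun k _ _ => hM.integrable k, fun k _ _ => hM.condExp_ae_le k.le_succ⟩

lemma IsSupermartingaleOn.integral_succ_le [IsFiniteMeasure P] {a b : ℕ}
    (hM : IsSupermartingaleOn 𝓕 P M a b) {k : ℕ} (hak : a ≤ k) (hkb : k < b) :
    ∫ ω, M (k + 1) ω ∂P ≤ ∫ ω, M k ω ∂P := by
  rw [← integral_condExp (𝓕.le k)]
  exact integral_mono_ae integrable_condExp (hM.2.1 k hak hkb.le) (hM.2.2 k hak hkb)

lemma IsSupermartingaleOn.integral_sub_le_integral_zero [IsProbabilityMeasure P] {lam : ℝ}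
    (hlam0 : 0 ≤ lam) (hlam1 : lam < 1) {n : ℕ} (hn : 1 ≤ n)
    (hM : IsSupermartingaleOn 𝓕 P M 0 n) {S : Ω → ℝ} (hS : Integrable S P) {z a : ℝ}
    (h : cvarObjective P lam (fun ω => S ω - M 1 ω) z ≤ a) :
    (∫ ω, S ω ∂P) - a ≤ ∫ ω, M 0 ω ∂P := by
  have hM1 : Integrable (M 1) P := hM.2.1 1 zero_le_one hn
  have hmean := integral_le_cvarObjective (X := fun ω => S ω - M 1 ω) hlam0 hlam1 (hS.sub hM1) z
  rw [integral_sub hS hM1] at hmean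
  linarith [hM.integral_succ_le le_rfl hn]

/-- Witness: the martingale `k ↦ E[∑_{j ≤ n} S_j⁺ | 𝓕 k]`. -/
lemma exists_supermartingale_ae_ge [IsFiniteMeasure P] {S : ℕ → Ω → ℝ} (hS : Adapted 𝓕 S)
    (hSint : ∀ k, Integrable (S k) P) (n : ℕ) :
    ∃ M, Supermartingale M 𝓕 P ∧ ∀ k ≤ n, S k ≤ᵐ[P] M k := by
  set T : Ω → ℝ := fun ω => ∑ j ∈ Finset.range (n + 1), max (S j ω) 0
  have hT : Integrable T P := integrable_finsetSum _ fun j _ => (hSint j).pos_part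
  refine ⟨fun k => P[T|𝓕 k], (martingale_condExp T 𝓕 P).supermartingale, fun k hk => ?_⟩
  have hST : S k ≤ᵐ[P] T := Eventually.of_forall fun ω =>
    (le_max_left _ _).trans (Finset.single_le_sum (f := fun j => max (S j ω) 0)
      (fun j _ => le_max_right _ _) (Finset.mem_range.2 (by omega)))
  simpa only [condExp_of_stronglyMeasurable (𝓕.le k) (hS k).stronglyMeasurable (hSint k)]
    using condExp_mono (m := 𝓕 k) (hSint k) hT hST

end Supermartingale

theorem stmt_18_general
    {Ω : Type*} {m0 : MeasurableSpace Ω} (P : Measure Ω) [IsProbabilityMeasure P]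
    (𝓕 : Filtration ℕ m0) (n : ℕ) (hn : 1 ≤ n)
    (S : ℕ → Ω → ℝ) (hS : Adapted 𝓕 S) (hSint : ∀ k, Integrable (S k) P)
    (α : ℕ → ℝ) (hα : ∀ k, 1 ≤ k → k ≤ n → 0 ≤ α k)
    (lam : ℝ) (hlam0 : 0 ≤ lam) (hlam1 : lam < 1) :
    sInf {x : ℝ | ∃ M : ℕ → Ω → ℝ, IsSupermartingaleOn 𝓕 P M 0 n ∧
        (∀ k, 1 ≤ k → k ≤ n →
          CVaR P lam (fun ω => max (S k ω - M k ω) 0) ≤ α k) ∧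
        x = ∫ ω, M 0 ω ∂P}
    =
    sInf {y : ℝ | ∃ z : ℕ → ℝ, (∀ k, 1 ≤ k → k ≤ n → z k ∈ Set.Icc 0 (α k)) ∧
        y = sInf {x : ℝ | ∃ M : ℕ → Ω → ℝ, IsSupermartingaleOn 𝓕 P M 0 n ∧
          (∀ k, 1 ≤ k → k ≤ n →
            (1 - lam)⁻¹ * (∫ ω, max (S k ω - M k ω - z k) 0 ∂P) + z k ≤ α k) ∧
          x = ∫ ω, M 0 ω ∂P}} := by
  set box : Set (ℕ → ℝ) := {z | ∀ k, 1 ≤ k → k ≤ n → z k ∈ Icc 0 (α k)}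
  set G : (ℕ → ℝ) → Set ℝ := fun z => {x | ∃ M : ℕ → Ω → ℝ, IsSupermartingaleOn 𝓕 P M 0 n ∧
    (∀ k, 1 ≤ k → k ≤ n → cvarObjective P lam (fun ω => S k ω - M k ω) (z k) ≤ α k) ∧
    x = ∫ ω, M 0 ω ∂P}
  obtain ⟨W, hW, hSW⟩ := exists_supermartingale_ae_ge hS hSint n
  have hG : ∀ z ∈ box, (G z).Nonempty := fun z hz => ⟨_, W, hW.isSupermartingaleOn 0 n,
    fun k hk1 hkn =>
      (cvarObjective_sub_eq_of_ae_le (hSW k hkn) (hz k hk1 hkn).1).trans_le (hz k hk1 hkn).2, rfl⟩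
  have hbdd : BddBelow (⋃ z ∈ box, G z) := by
    refine ⟨(∫ ω, S 1 ω ∂P) - α 1, ?_⟩
    simp only [mem_lowerBounds, mem_iUnion]
    rintro _ ⟨z, -, M, hM, hMz, rfl⟩
    exact hM.integral_sub_le_integral_zero hlam0 hlam1 hn (hSint 1) (hMz 1 le_rfl hn)
  have hbox : box.Nonempty := ⟨0, fun k hk1 hkn => ⟨le_rfl, hα k hk1 hkn⟩⟩
  refine (congrArg sInf ?_).trans
    ((csInf_biUnion_eq_csInf_image hbox hG hbdd).trans (congrArg sInf ?_))
  · ext x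
    simp only [mem_ofPred_eq, mem_iUnion, exists_prop]
    refine ⟨fun ⟨M, hM, hCVaR, hx⟩ => ?_, fun ⟨z, hz, M, hM, hzα, hx⟩ => ?_⟩ <;>
      have hconstr := forall_CVaR_posPart_le_iff hlam0 hlam1 (α := α) fun k _ hkn =>
        (hSint k).sub (hM.2.1 k k.zero_le hkn)
    · obtain ⟨z, hz, hzα⟩ := hconstr.1 hCVaR
      exact ⟨z, hz, M, hM, hzα, hx⟩
    · exact ⟨M, hM, hconstr.2 ⟨z, hz, hzα⟩, hx⟩
  · ext y
    exact ⟨fun ⟨z, hz, hy⟩ => ⟨z, hz, hy.symm⟩, fun ⟨z, hz, hy⟩ => ⟨z, hz, hy.symm⟩⟩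

/-- Proposition 5.2: `V₀^CVaR = inf { G(z₁,…,z_n) : z_k ∈ [0, α_k] }`, where
`G(z)` is the minimal cost of a supermartingale satisfying the expected-shortfall
constraints `(1-λ)⁻¹ E[(S_k - M_k - z_k)⁺] + z_k ≤ α_k`. -/
theorem stmt_18
    {Ω : Type*} {m0 : MeasurableSpace Ω} (P : Measure Ω) [IsProbabilityMeasure P]
    (𝓕 : Filtration ℕ m0) (n : ℕ) (hn : 1 ≤ n)
    (htriv : ∀ s : Set Ω, MeasurableSet[𝓕 0] s → P s = 0 ∨ P s = 1)
    (S : ℕ → Ω → ℝ) (hS : Adapted 𝓕 S) (hSint : ∀ k, Integrable (S k) P)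
    (α : ℕ → ℝ) (hα : ∀ k, 1 ≤ k → k ≤ n → 0 ≤ α k)
    (lam : ℝ) (hlam0 : 0 ≤ lam) (hlam1 : lam < 1) :
    sInf {x : ℝ | ∃ M : ℕ → Ω → ℝ, IsSupermartingaleOn 𝓕 P M 0 n ∧
        (∀ k, 1 ≤ k → k ≤ n →
          CVaR P lam (fun ω => max (S k ω - M k ω) 0) ≤ α k) ∧
        x = ∫ ω, M 0 ω ∂P}
    =
    sInf {y : ℝ | ∃ z : ℕ → ℝ, (∀ k, 1 ≤ k → k ≤ n → z k ∈ Set.Icc 0 (α k)) ∧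
        y = sInf {x : ℝ | ∃ M : ℕ → Ω → ℝ, IsSupermartingaleOn 𝓕 P M 0 n ∧
          (∀ k, 1 ≤ k → k ≤ n →
            (1 - lam)⁻¹ * (∫ ω, max (S k ω - M k ω - z k) 0 ∂P) + z k ≤ α k) ∧
          x = ∫ ω, M 0 ω ∂P}} :=
  stmt_18_general P 𝓕 n hn S hS hSint α hα lam hlam0 hlam1
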